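/- arXiv:2501.11398 — 5 statements merged into one kernel-verified Lean document; each statement's English description precedes it below -/
import Mathlib

section
/- Let (τ_i)_{i∈ℕ} be i.i.d. nonnegative random variables bounded by a constant K, with cumulative distribution function F satisfying F(t) ~ C t^β as t → 0⁺ for constants C > 0 and β > 0. Let M_n = min(τ_1, …, τ_n). Then E[M_n] ~ n^{-1/β} · Γ(1/β) / (β C^{1/β}) as n → ∞. -/
open MeasureTheory ProbabilityTheory Filter Real

lemma aux_lt_iInf {n : ℕ} (hn : 0 < n) (f : Fin n → ℝ) (a : ℝ) :
    a < ⨅ i, f i ↔ ∀ i, a < f i := by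
  have hne : Nonempty (Fin n) := ⟨⟨0, hn⟩⟩
  constructor
  · intro h i
    exact h.trans_le (ciInf_le (Set.Finite.bddBelow (Set.finite_range f)) i)
  · intro h
    obtain ⟨i, hi⟩ := (Set.range_nonempty f).csInf_mem (Set.finite_range f)
    rw [iInf, ← hi]
    exact h i

lemma aux_integrable_exp {b p : ℝ} (hb : 0 < b) (hp : 0 < p) :
    IntegrableOn (fun x => Real.exp (-b * x ^ p)) (Set.Ioi 0) := by
  refine (integrableOn_Ioi_comp_rpow_iff (fun y => Real.exp (-b * y ^ p))
    (p := 1/p) (one_div_ne_zero hp.ne')).mp ?_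
  have key : IntegrableOn (fun x : ℝ => |1/p| * (x ^ (1/p - 1) * Real.exp (-b * x ^ (1:ℝ))))
      (Set.Ioi 0) :=
    Integrable.const_mul (integrableOn_rpow_mul_exp_neg_mul_rpow
      (by simpa using (one_div_pos.mpr hp)) zero_lt_one hb) _
  refine key.congr_fun (fun x hx => ?_) measurableSet_Ioi
  have hx0 : (0:ℝ) < x := hx
  have h1 : ((x : ℝ) ^ (1/p)) ^ p = x := by
    rw [← Real.rpow_mul hx0.le, one_div_mul_cancel hp.ne', Real.rpow_one]
  rw [smul_eq_mul, h1]
  simp only [Real.rpow_one]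
  ring

lemma aux_tendsto_pow (x : ℕ → ℝ) (L : ℝ) (hx0 : ∀ n, 0 ≤ x n)
    (h : Tendsto (fun n : ℕ => (n : ℝ) * x n) atTop (nhds L)) :
    Tendsto (fun n : ℕ => (1 - x n) ^ n) atTop (nhds (Real.exp (-L))) := by
  have hx_to0 : Tendsto x atTop (nhds 0) := by
    have h1 : Tendsto (fun n : ℕ => ((n:ℝ) * x n) * (n:ℝ)⁻¹) atTop (nhds (L * 0)) :=
      h.mul (tendsto_inv_atTop_zero.comp tendsto_natCast_atTop_atTop)
    rw [mul_zero] at h1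
    refine h1.congr' ?_
    filter_upwards [eventually_gt_atTop 0] with n hn
    have : (n:ℝ) ≠ 0 := Nat.cast_ne_zero.mpr hn.ne'
    field_simp
  have hsmall : ∀ᶠ n in atTop, x n ≤ 1/2 :=
    hx_to0.eventually (eventually_le_nhds (by norm_num : (0:ℝ) < 1/2))
  have herr : Tendsto (fun n : ℕ => (n:ℝ) * (Real.log (1 - x n) + x n)) atTop (nhds 0) := by
    have hb : Tendsto (fun n : ℕ => 2 * ((n:ℝ) * x n) * x n) atTop (nhds (2 * L * 0)) :=
      (h.const_mul 2).mul hx_to0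
    rw [mul_zero] at hb
    refine squeeze_zero_norm' ?_ hb
    filter_upwards [hsmall] with n hn
    have h0 := hx0 n
    have hlt : |x n| < 1 := by rw [abs_of_nonneg h0]; linarith
    have key := Real.abs_log_sub_add_sum_range_le hlt 1
    simp only [Finset.sum_range_one, pow_one, Nat.cast_zero, zero_add, div_one] at key
    rw [abs_of_nonneg h0] at key
    have h2 : x n ^ 2 / (1 - x n) ≤ 2 * x n ^ 2 := by
      rw [div_le_iff₀ (by linarith)]
      nlinarith
    have h3 : |Real.log (1 - x n) + x n| ≤ 2 * x n ^ 2 := by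
      rw [add_comm]
      calc |x n + Real.log (1 - x n)| ≤ x n ^ 2 / (1 - x n) := by simpa using key
        _ ≤ 2 * x n ^ 2 := h2
    rw [norm_mul, norm_natCast]
    calc (n:ℝ) * ‖Real.log (1 - x n) + x n‖ ≤ (n:ℝ) * (2 * x n ^ 2) :=
          mul_le_mul_of_nonneg_left h3 (Nat.cast_nonneg n)
      _ = 2 * ((n:ℝ) * x n) * x n := by ring
  have hlog : Tendsto (fun n : ℕ => (n:ℝ) * Real.log (1 - x n)) atTop (nhds (-L)) := by
    have h4 := herr.sub h
    rw [zero_sub] at h4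
    refine h4.congr (fun n => ?_)
    ring
  have h5 := (Real.continuous_exp.tendsto _).comp hlog
  refine h5.congr' ?_
  filter_upwards [hsmall] with n hn
  have h0 := hx0 n
  have hpos : 0 < 1 - x n := by linarith
  simp only [Function.comp]
  rw [Real.exp_nat_mul, Real.exp_log hpos]

/-- Lemma A.1: if `(τ_i)` are i.i.d. nonnegative random variables bounded by `K`, with cdf
`F(t) = P(τ₀ ≤ t)` satisfying `F(t) ~ C t^β` as `t → 0⁺`, then
`E[min(τ₁,…,τ_n)] ~ n^{-1/β} Γ(1/β) / (β C^{1/β})`. -/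
theorem stmt_0 {Ω : Type*} [MeasurableSpace Ω] (μ : Measure Ω) [IsProbabilityMeasure μ]
    (τ : ℕ → Ω → ℝ)
    (hmeas : ∀ i, Measurable (τ i))
    (hnonneg : ∀ i ω, 0 ≤ τ i ω)
    (K : ℝ) (hbdd : ∀ i ω, τ i ω ≤ K)
    (hindep : iIndepFun τ μ)
    (hident : ∀ i, μ.map (τ i) = μ.map (τ 0))
    (C β : ℝ) (hC : 0 < C) (hβ : 0 < β)
    (hF : Tendsto (fun t : ℝ => (μ {ω | τ 0 ω ≤ t}).toReal / (C * t ^ β))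
        (nhdsWithin 0 (Set.Ioi 0)) (nhds 1)) :
    Tendsto (fun n : ℕ =>
        (∫ ω, (⨅ i : Fin n, τ i ω) ∂μ) /
          ((n : ℝ) ^ (-(1 / β)) * (Real.Gamma (1 / β) / (β * C ^ (1 / β)))))
      atTop (nhds 1) := by
  set F : ℝ → ℝ := fun t => (μ {ω | τ 0 ω ≤ t}).toReal with hFdef
  have hmeasur : ∀ t : ℝ, MeasurableSet {ω | τ 0 ω ≤ t} :=
    fun t => measurableSet_le (hmeas 0) measurable_const
  have hFle1 : ∀ t, F t ≤ 1 := by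
    intro t
    have h := prob_le_one (μ := μ) (s := {ω | τ 0 ω ≤ t})
    simpa using ENNReal.toReal_mono ENNReal.one_ne_top h
  have hF0 : ∀ t, 0 ≤ F t := fun t => ENNReal.toReal_nonneg
  have hFmono : Monotone F := by
    intro s t hst
    exact ENNReal.toReal_mono (measure_ne_top μ _)
      (measure_mono (fun ω h => le_trans h hst))
  have hFK : ∀ t, K ≤ t → F t = 1 := by
    intro t ht
    have hset : {ω | τ 0 ω ≤ t} = Set.univ :=
      Set.eq_univ_of_forall fun ω => le_trans (hbdd 0 ω) ht
    simp [hFdef, hset]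
  -- K > 0
  have hK : 0 < K := by
    by_contra hK
    push_neg at hK
    have hFone : ∀ t : ℝ, 0 < t → F t = 1 := fun t ht => hFK t (hK.trans ht.le)
    have h1 : Tendsto (fun t : ℝ => C * t ^ β) (nhdsWithin 0 (Set.Ioi 0)) (nhds 1) := by
      have hinv := hF.inv₀ one_ne_zero
      rw [inv_one] at hinv
      refine hinv.congr' ?_
      filter_upwards [self_mem_nhdsWithin] with t ht
      have ht' : (0:ℝ) < t := ht
      show (F t / (C * t ^ β))⁻¹ = C * t ^ β
      rw [hFone t ht', one_div, inv_inv]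
    have h0 : Tendsto (fun t : ℝ => C * t ^ β) (nhdsWithin 0 (Set.Ioi 0)) (nhds 0) := by
      have hrp : Tendsto (fun t : ℝ => t ^ β) (nhds 0) (nhds 0) := by
        have := (Real.continuousAt_rpow_const 0 β (Or.inr hβ.le)).tendsto
        rwa [Real.zero_rpow hβ.ne'] at this
      have h2 : Tendsto (fun t : ℝ => C * t ^ β) (nhdsWithin 0 (Set.Ioi 0)) (nhds (C * 0)) :=
        Tendsto.mono_left (hrp.const_mul C) nhdsWithin_le_nhds
      simpa using h2
    have := tendsto_nhds_unique h0 h1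
    norm_num at this
  -- lower bound near 0
  have hev : ∀ᶠ t in nhdsWithin 0 (Set.Ioi 0), 1/2 ≤ F t / (C * t ^ β) :=
    hF.eventually (eventually_ge_nhds (by norm_num))
  rw [eventually_nhdsWithin_iff, Metric.eventually_nhds_iff] at hev
  obtain ⟨ε, hε, hball⟩ := hev
  set t₁ : ℝ := min (ε/2) K with ht₁def
  have ht₁ : 0 < t₁ := lt_min (by linarith) hK
  have ht₁K : t₁ ≤ K := min_le_right _ _
  have hlow1 : ∀ t, 0 < t → t ≤ t₁ → C/2 * t ^ β ≤ F t := by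
    intro t ht htt₁
    have hdist : dist t 0 < ε := by
      rw [Real.dist_eq, sub_zero, abs_of_pos ht]
      calc t ≤ t₁ := htt₁
        _ ≤ ε/2 := min_le_left _ _
        _ < ε := by linarith
    have h2 := hball hdist ht
    have hpos : 0 < C * t ^ β := by positivity
    rw [le_div_iff₀ hpos] at h2
    linarith
  set c : ℝ := C/2 * (t₁/K) ^ β with hcdef
  have hc : 0 < c := by positivity
  have hlow : ∀ t, 0 < t → t ≤ K → c * t ^ β ≤ F t := by
    intro t ht htK
    rcases le_or_gt t t₁ with h | h
    · have h1 : (t₁/K) ^ β ≤ 1 :=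
        Real.rpow_le_one (by positivity) (div_le_one_of_le₀ ht₁K hK.le) hβ.le
      have h2 : c * t ^ β ≤ C/2 * t ^ β := by
        have := mul_le_mul_of_nonneg_right h1 (le_of_lt (Real.rpow_pos_of_pos ht β))
        calc c * t ^ β = C/2 * ((t₁/K) ^ β * t ^ β) := by ring
          _ ≤ C/2 * (1 * t ^ β) := by
              apply mul_le_mul_of_nonneg_left _ (by linarith)
              exact mul_le_mul_of_nonneg_right h1 (Real.rpow_nonneg ht.le β)
          _ = C/2 * t ^ β := by ring
      exact h2.trans (hlow1 t ht h)
    · have h1 : c * t ^ β ≤ c * K ^ β :=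
        mul_le_mul_of_nonneg_left (Real.rpow_le_rpow ht.le htK hβ.le) hc.le
      have h2 : c * K ^ β = C/2 * t₁ ^ β := by
        rw [hcdef, Real.div_rpow ht₁.le hK.le]
        field_simp
      have h3 : C/2 * t₁ ^ β ≤ F t₁ := hlow1 t₁ ht₁ le_rfl
      have h4 : F t₁ ≤ F t := hFmono h.le
      linarith
  -- survival function
  have hsurv : ∀ (t : ℝ) (n : ℕ), 0 < n →
      (μ {ω | t < ⨅ i : Fin n, τ i ω}).toReal = (1 - F t) ^ n := by
    intro t n hn
    have hset : {ω | t < ⨅ i : Fin n, τ i ω} = ⋂ i ∈ Finset.range n, τ i ⁻¹' (Set.Ioi t) := by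
      ext ω
      simp only [Set.mem_setOf_eq, Set.mem_iInter, Finset.mem_range, Set.mem_preimage,
        Set.mem_Ioi]
      rw [aux_lt_iInf hn]
      exact ⟨fun h i hi => h ⟨i, hi⟩, fun h i => h i i.2⟩
    rw [hset, hindep.meas_biInter (fun i _ => ⟨Set.Ioi t, measurableSet_Ioi, rfl⟩)]
    have heach : ∀ i, μ (τ i ⁻¹' Set.Ioi t) = μ (τ 0 ⁻¹' Set.Ioi t) := by
      intro i
      rw [← Measure.map_apply (hmeas i) measurableSet_Ioi, hident i,
        Measure.map_apply (hmeas 0) measurableSet_Ioi]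
    rw [Finset.prod_congr rfl (fun i _ => heach i), Finset.prod_const, Finset.card_range,
      ENNReal.toReal_pow]
    congr 1
    have hcompl : τ 0 ⁻¹' Set.Ioi t = {ω | τ 0 ω ≤ t}ᶜ := by
      ext ω; simp [not_le]
    rw [hcompl, measure_compl (hmeasur t) (measure_ne_top μ _), measure_univ,
      ENNReal.toReal_sub_of_le prob_le_one ENNReal.one_ne_top, ENNReal.toReal_one]
  -- layer cake
  have hEint : ∀ n : ℕ, 0 < n →
      ∫ ω, (⨅ i : Fin n, τ i ω) ∂μ = ∫ t in Set.Ioi 0, (1 - F t) ^ n := by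
    intro n hn
    have hMmeas : Measurable (fun ω => ⨅ i : Fin n, τ i ω) := Measurable.iInf (fun i => hmeas i)
    have hne : Nonempty (Fin n) := ⟨⟨0, hn⟩⟩
    have hMnn : ∀ ω, 0 ≤ ⨅ i : Fin n, τ i ω := fun ω => le_ciInf (fun i => hnonneg i ω)
    have hMle : ∀ ω, (⨅ i : Fin n, τ i ω) ≤ K := fun ω =>
      (ciInf_le (Set.Finite.bddBelow (Set.finite_range _)) ⟨0, hn⟩).trans (hbdd _ ω)
    have hint : Integrable (fun ω => ⨅ i : Fin n, τ i ω) μ := by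
      refine (integrable_const K).mono' hMmeas.aestronglyMeasurable ?_
      refine Eventually.of_forall (fun ω => ?_)
      rw [Real.norm_eq_abs, abs_of_nonneg (hMnn ω)]
      exact hMle ω
    rw [hint.integral_eq_integral_meas_lt (Eventually.of_forall hMnn)]
    have : (fun t => (μ {a | t < ⨅ i : Fin n, τ i a}).toReal) =
        fun t => (1 - F t) ^ n := funext fun t => hsurv t n hn
    exact congrArg (fun f => ∫ t in Set.Ioi 0, f t) this
  -- scaling
  set a : ℕ → ℝ := fun n => (n:ℝ) ^ (-(1/β)) with hadef
  have ha_pos : ∀ n : ℕ, 0 < n → 0 < a n := fun n hn =>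
    Real.rpow_pos_of_pos (by exact_mod_cast hn) _
  have haβ : ∀ n : ℕ, 0 < n → (a n) ^ β = (n:ℝ)⁻¹ := by
    intro n hn
    have hn0 : (0:ℝ) ≤ (n:ℝ) := Nat.cast_nonneg n
    show ((n:ℝ) ^ (-(1/β))) ^ β = (n:ℝ)⁻¹
    rw [← Real.rpow_mul hn0, neg_mul, one_div, inv_mul_cancel₀ hβ.ne', Real.rpow_neg_one]
  set J : ℕ → ℝ := fun n => ∫ s in Set.Ioi 0, (1 - F (a n * s)) ^ n with hJdef
  have hsub : ∀ n : ℕ, 0 < n → ∫ t in Set.Ioi 0, (1 - F t) ^ n = a n * J n := by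
    intro n hn
    have h := integral_comp_mul_left_Ioi (fun t => (1 - F t) ^ n) 0 (ha_pos n hn)
    rw [mul_zero] at h
    rw [hJdef]
    simp only []
    rw [h, smul_eq_mul, ← mul_assoc, mul_inv_cancel₀ (ha_pos n hn).ne', one_mul]
  set L : ℝ := Real.Gamma (1/β) / (β * C ^ (1/β)) with hLdef
  have hL : 0 < L := by
    have := Real.Gamma_pos_of_pos (one_div_pos.mpr hβ)
    positivity
  have hlimval : ∫ s in Set.Ioi 0, Real.exp (-(C * s ^ β)) = L := by
    have h := integral_exp_neg_mul_rpow hβ hC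
    simp_rw [neg_mul] at h
    rw [h, Real.Gamma_add_one (one_div_ne_zero hβ.ne'), hLdef]
    rw [show (-1/β : ℝ) = -(1/β) by ring, Real.rpow_neg hC.le]
    have hCpow : (0:ℝ) < C ^ (1/β) := Real.rpow_pos_of_pos hC _
    rw [eq_div_iff (by positivity : β * C ^ (1/β) ≠ 0)]
    field_simp
  -- dominated convergence
  have hFmeas : Measurable F := hFmono.measurable
  have hdct : Tendsto J atTop (nhds L) := by
    rw [← hlimval]
    refine tendsto_integral_filter_of_dominated_convergence
      (fun s => Real.exp (-(c * s ^ β))) ?_ ?_ ?_ ?_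
    · refine Eventually.of_forall (fun n => ?_)
      exact ((measurable_const.sub (hFmeas.comp (measurable_id.const_mul (a n)))).pow_const
        n).aestronglyMeasurable
    · filter_upwards [eventually_ge_atTop 1] with n hn
      rw [ae_restrict_iff' measurableSet_Ioi]
      refine Eventually.of_forall (fun s hs => ?_)
      have hs0 : (0:ℝ) < s := hs
      have hn0 : 0 < n := hn
      have ht : 0 < a n * s := mul_pos (ha_pos n hn0) hs0
      have hb1 : 0 ≤ 1 - F (a n * s) := by linarith [hFle1 (a n * s)]
      rw [Real.norm_eq_abs, abs_of_nonneg (pow_nonneg hb1 n)]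
      rcases le_or_gt (a n * s) K with hK' | hK'
      · have hFt : c * (a n * s) ^ β ≤ F (a n * s) := hlow _ ht hK'
        have htβ : (a n * s) ^ β = (n:ℝ)⁻¹ * s ^ β := by
          rw [Real.mul_rpow (ha_pos n hn0).le hs0.le, haβ n hn0]
        have hexp1 : 1 - F (a n * s) ≤ Real.exp (-(F (a n * s))) := by
          have := Real.add_one_le_exp (-(F (a n * s)))
          linarith
        calc (1 - F (a n * s)) ^ n ≤ (Real.exp (-(F (a n * s)))) ^ n :=
              pow_le_pow_left₀ hb1 hexp1 n
          _ = Real.exp ((n:ℝ) * (-(F (a n * s)))) := by rw [Real.exp_nat_mul]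
          _ ≤ Real.exp (-(c * s ^ β)) := by
              apply Real.exp_le_exp.mpr
              have h1 : c * s ^ β ≤ (n:ℝ) * F (a n * s) := by
                have h2 := mul_le_mul_of_nonneg_left hFt (Nat.cast_nonneg n)
                calc c * s ^ β = (n:ℝ) * (c * ((n:ℝ)⁻¹ * s ^ β)) := by
                      have hn' : (n:ℝ) ≠ 0 := Nat.cast_ne_zero.mpr hn0.ne'
                      field_simp
                  _ = (n:ℝ) * (c * (a n * s) ^ β) := by rw [htβ]
                  _ ≤ (n:ℝ) * F (a n * s) := h2
              linarith
      · rw [hFK _ hK'.le]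
        simp only [sub_self]
        rw [zero_pow hn0.ne']
        exact (Real.exp_pos _).le
    · exact aux_integrable_exp hc hβ |>.congr_fun (fun x _ => by simp only [neg_mul]) measurableSet_Ioi
    · rw [ae_restrict_iff' measurableSet_Ioi]
      refine Eventually.of_forall (fun s hs => ?_)
      have hs0 : (0:ℝ) < s := hs
      have htend0 : Tendsto (fun n : ℕ => a n * s) atTop (nhdsWithin 0 (Set.Ioi 0)) := by
        rw [tendsto_nhdsWithin_iff]
        constructor
        · have h1 : Tendsto (fun n : ℕ => a n) atTop (nhds 0) :=
            (tendsto_rpow_neg_atTop (by positivity)).comp tendsto_natCast_atTop_atTop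
          have := h1.mul_const s
          rwa [zero_mul] at this
        · filter_upwards [eventually_ge_atTop 1] with n hn
          exact mul_pos (ha_pos n hn) hs0
      have hratio := hF.comp htend0
      have hmul : Tendsto (fun n : ℕ => (n:ℝ) * F (a n * s)) atTop (nhds (C * s ^ β)) := by
        have h1 := hratio.mul_const (C * s ^ β)
        rw [one_mul] at h1
        refine h1.congr' ?_
        filter_upwards [eventually_ge_atTop 1] with n hn
        have hn0 : 0 < n := hn
        have htβ : (a n * s) ^ β = (n:ℝ)⁻¹ * s ^ β := by
          rw [Real.mul_rpow (ha_pos n hn0).le hs0.le, haβ n hn0]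
        simp only [Function.comp]
        rw [htβ]
        have hn' : (n:ℝ) ≠ 0 := Nat.cast_ne_zero.mpr hn0.ne'
        have hsβ : (0:ℝ) < s ^ β := Real.rpow_pos_of_pos hs0 _
        field_simp
        ring
      have := aux_tendsto_pow (fun n => F (a n * s)) (C * s ^ β) (fun n => hF0 _) hmul
      exact this
  -- conclusion
  have hJL : Tendsto (fun n : ℕ => J n / L) atTop (nhds 1) := by
    have := hdct.div_const L
    rwa [div_self hL.ne'] at this
  refine Tendsto.congr' ?_ hJL
  filter_upwards [eventually_ge_atTop 1] with n hn
  have hn0 : 0 < n := hn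
  rw [hEint n hn0, hsub n hn0, mul_div_mul_left _ _ (ha_pos n hn0).ne']
end

section
/- Let (p_i)_{i≥1} be a non-increasing sequence in [0,1] and let d ≥ 1 be an integer. Then for every k with 0 ≤ k ≤ d−1 there exists a constant C_k > 0 such that for all i ≥ 1: i·(i p_i)^k ≤ C_k · i · (∑_{j=1}^{i} j^{d−1} p_j^d)^{k/d}. -/
open Finset

lemma aux_step (d : ℕ) (hd : 1 ≤ d) (j : ℕ) :
    ((j : ℝ) + 1) ^ d - (j : ℝ) ^ d ≤ d * ((j : ℝ) + 1) ^ (d - 1) := by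
  have h := geom_sum₂_mul ((j : ℝ) + 1) (j : ℝ) d
  simp only [add_sub_cancel_left, mul_one] at h
  rw [← h]
  calc ∑ m ∈ range d, ((j:ℝ)+1) ^ m * (j:ℝ) ^ (d - 1 - m)
      ≤ ∑ m ∈ range d, ((j:ℝ)+1) ^ (d-1) := by
        refine Finset.sum_le_sum fun m hm => ?_
        have hm' : m ≤ d - 1 := Nat.le_sub_one_of_lt (Finset.mem_range.mp hm)
        calc ((j:ℝ)+1) ^ m * (j:ℝ) ^ (d - 1 - m)
            ≤ ((j:ℝ)+1) ^ m * ((j:ℝ)+1) ^ (d - 1 - m) := by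
              apply mul_le_mul_of_nonneg_left _ (by positivity)
              exact pow_le_pow_left₀ (by positivity) (by linarith) _
          _ = ((j:ℝ)+1) ^ (d - 1) := by
              rw [← pow_add, Nat.add_sub_cancel' hm']
    _ = d * ((j:ℝ)+1) ^ (d-1) := by
        rw [Finset.sum_const, Finset.card_range, nsmul_eq_mul]

lemma aux_sum_pow (d : ℕ) (hd : 1 ≤ d) (i : ℕ) :
    (i : ℝ) ^ d / d ≤ ∑ j ∈ Finset.Icc 1 i, (j : ℝ) ^ (d - 1) := by
  have hdR : (0 : ℝ) < d := by exact_mod_cast hd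
  rw [div_le_iff₀ hdR]
  have h1 : ∑ j ∈ Finset.Icc 1 i, (j : ℝ) ^ (d - 1)
      = ∑ j ∈ Finset.range i, ((j : ℝ) + 1) ^ (d - 1) := by
    rw [← Finset.Ico_add_one_right_eq_Icc, Finset.sum_Ico_eq_sum_range]
    simp [add_comm]
  have h2 : (i : ℝ) ^ d = ∑ j ∈ Finset.range i, (((j:ℝ)+1) ^ d - (j:ℝ) ^ d) := by
    have := Finset.sum_range_sub (fun j => ((j:ℝ)) ^ d) i
    push_cast at this
    rw [this, zero_pow (by omega : d ≠ 0), sub_zero]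
  rw [h1, h2, mul_comm, Finset.mul_sum]
  exact Finset.sum_le_sum fun j _ => aux_step d hd j

/-- For a non-increasing sequence `(p_i)` in `[0,1]` and `0 ≤ k ≤ d-1`, there is a constant
`C_k > 0` (depending only on `k` and `d`) with
`i (i p_i)^k ≤ C_k i (∑_{j=1}^i j^{d-1} p_j^d)^{k/d}` for all `i ≥ 1`. -/
theorem stmt_3 (d : ℕ) (hd : 1 ≤ d) (k : ℕ) (hk : k ≤ d - 1) :
    ∃ C : ℝ, 0 < C ∧
      ∀ p : ℕ → ℝ, (∀ i, p i ∈ Set.Icc (0 : ℝ) 1) → Antitone p →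
        ∀ i : ℕ, 1 ≤ i →
          (i : ℝ) * ((i : ℝ) * p i) ^ k ≤
            C * (i : ℝ) *
              (∑ j ∈ Finset.Icc 1 i, (j : ℝ) ^ (d - 1) * p j ^ d) ^ ((k : ℝ) / d) := by
  have hdR : (0 : ℝ) < d := by exact_mod_cast hd
  refine ⟨(d : ℝ) ^ k, by positivity, fun p hp hmono i hi => ?_⟩
  set S : ℝ := ∑ j ∈ Finset.Icc 1 i, (j : ℝ) ^ (d - 1) * p j ^ d with hS
  have hp0 : ∀ j, 0 ≤ p j := fun j => (hp j).1
  have hSnn : 0 ≤ S := Finset.sum_nonneg fun j _ => mul_nonneg (by positivity) (pow_nonneg (hp0 j) d)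
  set t : ℝ := (i : ℝ) * p i with ht
  have ht0 : 0 ≤ t := mul_nonneg (Nat.cast_nonneg i) (hp0 i)
  -- S ≥ t^d / d
  have hkey : t ^ d / d ≤ S := by
    have h1 : p i ^ d * ((i : ℝ) ^ d / d) ≤ p i ^ d * ∑ j ∈ Finset.Icc 1 i, (j : ℝ) ^ (d-1) :=
      mul_le_mul_of_nonneg_left (aux_sum_pow d hd i) (pow_nonneg (hp0 i) d)
    have h2 : p i ^ d * ∑ j ∈ Finset.Icc 1 i, (j : ℝ) ^ (d-1) ≤ S := by
      rw [Finset.mul_sum]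
      refine Finset.sum_le_sum fun j hj => ?_
      rw [mul_comm]
      exact mul_le_mul_of_nonneg_left
        (pow_le_pow_left₀ (hp0 i) (hmono (Finset.mem_Icc.mp hj).2) d) (by positivity)
    calc t ^ d / d = p i ^ d * ((i : ℝ) ^ d / d) := by rw [ht, mul_pow]; ring
      _ ≤ S := h1.trans h2
  -- rpow step
  have hrpow : t ^ k ≤ (d : ℝ) ^ k * S ^ ((k : ℝ) / d) := by
    have h3 : (t ^ d / d) ^ ((k : ℝ) / d) ≤ S ^ ((k : ℝ) / d) :=
      Real.rpow_le_rpow (div_nonneg (pow_nonneg ht0 d) hdR.le) hkey (by positivity)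
    have h4 : (t ^ d / d) ^ ((k : ℝ) / d) = t ^ k / (d : ℝ) ^ ((k : ℝ) / d) := by
      rw [Real.div_rpow (pow_nonneg ht0 d) hdR.le]
      congr 1
      rw [← Real.rpow_natCast t d, ← Real.rpow_mul ht0,
        mul_div_cancel₀ _ (ne_of_gt hdR), Real.rpow_natCast]
    have h5 : (d : ℝ) ^ ((k : ℝ) / d) ≤ (d : ℝ) ^ k := by
      rw [← Real.rpow_natCast (d : ℝ) k]
      refine Real.rpow_le_rpow_of_exponent_le (by exact_mod_cast hd) ?_
      rw [div_le_iff₀ hdR]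
      nlinarith [show (1:ℝ) ≤ d from by exact_mod_cast hd, show (0:ℝ) ≤ k from Nat.cast_nonneg k]
    have hdp : (0:ℝ) < (d : ℝ) ^ ((k : ℝ) / d) := Real.rpow_pos_of_pos hdR _
    calc t ^ k = (d : ℝ) ^ ((k : ℝ) / d) * (t ^ k / (d : ℝ) ^ ((k : ℝ) / d)) := by
          field_simp
      _ ≤ (d : ℝ) ^ ((k : ℝ) / d) * S ^ ((k : ℝ) / d) := by
          rw [← h4]; exact mul_le_mul_of_nonneg_left h3 hdp.le
      _ ≤ (d : ℝ) ^ k * S ^ ((k : ℝ) / d) :=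
          mul_le_mul_of_nonneg_right h5 (Real.rpow_nonneg hSnn _)
  calc (i : ℝ) * t ^ k ≤ (i : ℝ) * ((d : ℝ) ^ k * S ^ ((k : ℝ) / d)) :=
        mul_le_mul_of_nonneg_left hrpow (by positivity)
    _ = (d : ℝ) ^ k * (i : ℝ) * S ^ ((k : ℝ) / d) := by ring
end

section
/- Let (p_i)_{i≥1} be a non-increasing sequence in [0,1], d ≥ 1 an integer, and suppose ∑_{i≥1} i^{d−1} p_i^d = +∞. Then for every k with 1 ≤ k ≤ d, (i p_i)^{d−k} = o(∑_{j=1}^{i} j^{d−1} p_j^d) as i → ∞. -/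
open Filter

private lemma step_pow_le (d m : ℕ) :
    ((m : ℝ) + 1) ^ d - (m : ℝ) ^ d ≤ d * ((m : ℝ) + 1) ^ (d - 1) := by
  rcases Nat.eq_zero_or_pos d with h | h
  · simp [h]
  have key := geom_sum₂_mul ((m : ℝ) + 1) (m : ℝ) d
  have h1 : ((m : ℝ) + 1) - (m : ℝ) = 1 := by ring
  rw [h1, mul_one] at key
  rw [← key]
  have hb : ∀ i ∈ Finset.range d, ((m : ℝ) + 1) ^ i * (m : ℝ) ^ (d - 1 - i)
      ≤ ((m : ℝ) + 1) ^ (d - 1) := by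
    intro i hi
    have hi' := Finset.mem_range.mp hi
    calc ((m : ℝ) + 1) ^ i * (m : ℝ) ^ (d - 1 - i)
        ≤ ((m : ℝ) + 1) ^ i * ((m : ℝ) + 1) ^ (d - 1 - i) :=
          mul_le_mul_of_nonneg_left
            (pow_le_pow_left₀ (by positivity) (by linarith) _) (by positivity)
      _ = ((m : ℝ) + 1) ^ (d - 1) := by
          rw [← pow_add]; congr 1; omega
  calc ∑ i ∈ Finset.range d, ((m : ℝ) + 1) ^ i * (m : ℝ) ^ (d - 1 - i)
      ≤ ∑ _i ∈ Finset.range d, ((m : ℝ) + 1) ^ (d - 1) := Finset.sum_le_sum hb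
    _ = d * ((m : ℝ) + 1) ^ (d - 1) := by
        rw [Finset.sum_const, Finset.card_range, nsmul_eq_mul]

/-- For a non-increasing sequence `(p_i)` in `[0,1]` with `∑ i^{d-1} p_i^d = +∞`, one has
`(i p_i)^{d-k} = o(∑_{j=1}^i j^{d-1} p_j^d)` as `i → ∞`, for every `1 ≤ k ≤ d`. -/
theorem stmt_4 (d : ℕ) (hd : 1 ≤ d) (p : ℕ → ℝ)
    (hp : ∀ i, p i ∈ Set.Icc (0 : ℝ) 1) (hmono : Antitone p)
    (hdiv : Tendsto (fun i : ℕ => ∑ j ∈ Finset.Icc 1 i, (j : ℝ) ^ (d - 1) * p j ^ d)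
      atTop atTop)
    (k : ℕ) (hk1 : 1 ≤ k) (hkd : k ≤ d) :
    Tendsto (fun i : ℕ =>
        ((i : ℝ) * p i) ^ (d - k) / ∑ j ∈ Finset.Icc 1 i, (j : ℝ) ^ (d - 1) * p j ^ d)
      atTop (nhds 0) := by
  set S : ℕ → ℝ := fun i => ∑ j ∈ Finset.Icc 1 i, (j : ℝ) ^ (d - 1) * p j ^ d with hSdef
  have hS0 : ∀ i, 0 ≤ S i := by
    intro i
    apply Finset.sum_nonneg
    intro j _
    have := (hp j).1
    positivity
  have hA : ∀ i : ℕ, ((i : ℝ) * p i) ^ d ≤ d * S i := by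
    intro i
    have h2 : (∑ j ∈ Finset.Icc 1 i, (j : ℝ) ^ (d - 1)) * p i ^ d ≤ S i := by
      rw [Finset.sum_mul]
      apply Finset.sum_le_sum
      intro j hj
      have hji := (Finset.mem_Icc.mp hj).2
      have hpj := hmono hji
      have hpi0 := (hp i).1
      exact mul_le_mul_of_nonneg_left (pow_le_pow_left₀ hpi0 hpj d) (by positivity)
    have hre : ∑ j ∈ Finset.Icc 1 i, (j : ℝ) ^ (d - 1)
        = ∑ m ∈ Finset.range i, (((m : ℕ) : ℝ) + 1) ^ (d - 1) := by
      rw [← Finset.Ico_add_one_right_eq_Icc, Finset.sum_Ico_eq_sum_range]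
      simp only [Nat.add_sub_cancel]
      apply Finset.sum_congr rfl
      intro m _
      push_cast
      ring_nf
    have htel : ∑ m ∈ Finset.range i, ((((m : ℕ) : ℝ) + 1) ^ d - ((m : ℕ) : ℝ) ^ d)
        = (i : ℝ) ^ d := by
      have := Finset.sum_range_sub (fun m : ℕ => ((m : ℕ) : ℝ) ^ d) i
      simp only [Nat.cast_zero, zero_pow (by omega : d ≠ 0), sub_zero] at this
      rw [← this]
      apply Finset.sum_congr rfl
      intro m _
      push_cast
      ring_nf
    have h3 : (i : ℝ) ^ d ≤ d * ∑ j ∈ Finset.Icc 1 i, (j : ℝ) ^ (d - 1) := by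
      rw [hre, Finset.mul_sum, ← htel]
      exact Finset.sum_le_sum fun m _ => step_pow_le d m
    have hpi0 := (hp i).1
    calc ((i : ℝ) * p i) ^ d = (i : ℝ) ^ d * p i ^ d := mul_pow _ _ _
      _ ≤ (d * ∑ j ∈ Finset.Icc 1 i, (j : ℝ) ^ (d - 1)) * p i ^ d := by
          apply mul_le_mul_of_nonneg_right h3 (by positivity)
      _ = (d : ℝ) * ((∑ j ∈ Finset.Icc 1 i, (j : ℝ) ^ (d - 1)) * p i ^ d) := by ring
      _ ≤ d * S i := by
          apply mul_le_mul_of_nonneg_left h2 (by positivity)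
  rw [Metric.tendsto_atTop]
  intro ε hε
  set M : ℝ := 1 + d / ε with hMdef
  have hM1 : (1 : ℝ) ≤ M := by
    rw [hMdef]
    have : (0:ℝ) ≤ (d : ℝ) / ε := by positivity
    linarith
  have hM0 : (0 : ℝ) < M := by linarith
  have hMk : (d : ℝ) < ε * M ^ k := by
    have hMM : M ≤ M ^ k := le_self_pow₀ hM1 (by omega)
    have h1 : (d : ℝ) < ε * M := by
      rw [hMdef]
      have : ε * (1 + (d:ℝ)/ε) = ε + d := by field_simp
      rw [this]; linarith
    calc (d : ℝ) < ε * M := h1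
      _ ≤ ε * M ^ k := by gcongr
  have hMdk : (0 : ℝ) < M ^ (d - k) := by positivity
  obtain ⟨N, hN⟩ := eventually_atTop.mp (tendsto_atTop.mp hdiv (M ^ (d - k) / ε + 1))
  refine ⟨N, fun i hi => ?_⟩
  have hSi : M ^ (d - k) / ε + 1 ≤ S i := hN i hi
  have hSpos : 0 < S i := lt_of_lt_of_le (by positivity) hSi
  have hip0 : (0 : ℝ) ≤ (i : ℝ) * p i := mul_nonneg (Nat.cast_nonneg i) (hp i).1
  have hfnn : 0 ≤ ((i : ℝ) * p i) ^ (d - k) / S i := by positivity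
  rw [Real.dist_eq, sub_zero, abs_of_nonneg hfnn]
  rcases le_or_gt M ((i : ℝ) * p i) with h | h
  · have hip : (0 : ℝ) < (i : ℝ) * p i := lt_of_lt_of_le hM0 h
    have hb : ((i : ℝ) * p i) ^ (d - k) / S i ≤ (d : ℝ) / ((i : ℝ) * p i) ^ k := by
      rw [div_le_div_iff₀ hSpos (by positivity)]
      calc ((i : ℝ) * p i) ^ (d - k) * ((i : ℝ) * p i) ^ k
          = ((i : ℝ) * p i) ^ d := by rw [← pow_add]; congr 1; omega
        _ ≤ d * S i := hA i
    have hb2 : (d : ℝ) / ((i : ℝ) * p i) ^ k < ε := by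
      rw [div_lt_iff₀ (by positivity)]
      calc (d : ℝ) < ε * M ^ k := hMk
        _ ≤ ε * ((i : ℝ) * p i) ^ k := by gcongr
    linarith
  · have hle : (i : ℝ) * p i ≤ M := h.le
    have hb : ((i : ℝ) * p i) ^ (d - k) / S i ≤ M ^ (d - k) / S i := by
      gcongr
    have hb2 : M ^ (d - k) / S i < ε := by
      rw [div_lt_iff₀ hSpos]
      have hS2 : M ^ (d - k) / ε < S i := by linarith
      calc M ^ (d - k) = M ^ (d - k) / ε * ε := by field_simp
        _ < S i * ε := mul_lt_mul_of_pos_right hS2 hε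
        _ = ε * S i := mul_comm _ _
    linarith
end

section
/- Let (p_i)_{i≥1} be a non-increasing sequence in [0,1] and let d ≥ 1, 1 ≤ k ≤ d−1 be integers. Then there exists a constant C_k > 0 such that for all j ≥ 2: ∑_{i=1}^{j−1} i^{d−1} p_i^{d−k} ≤ C_k · j^k · (∑_{i=1}^{j−1} i^{d−1} p_i^d)^{(d−k)/d}. -/
/-- For a non-increasing sequence `(p_i)` in `[0,1]` and integers `d ≥ 1`, `1 ≤ k ≤ d-1`,
there is a constant `C_k > 0` (depending only on `k` and `d`) with
`∑_{i=1}^{j-1} i^{d-1} p_i^{d-k} ≤ C_k j^k (∑_{i=1}^{j-1} i^{d-1} p_i^d)^{(d-k)/d}` for `j ≥ 2`. -/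
theorem stmt_5 (d : ℕ) (hd : 1 ≤ d) (k : ℕ) (hk1 : 1 ≤ k) (hk : k ≤ d - 1) :
    ∃ C : ℝ, 0 < C ∧
      ∀ p : ℕ → ℝ, (∀ i, p i ∈ Set.Icc (0 : ℝ) 1) → Antitone p →
        ∀ j : ℕ, 2 ≤ j →
          ∑ i ∈ Finset.Icc 1 (j - 1), (i : ℝ) ^ (d - 1) * p i ^ (d - k) ≤
            C * (j : ℝ) ^ k *
              (∑ i ∈ Finset.Icc 1 (j - 1), (i : ℝ) ^ (d - 1) * p i ^ d) ^
                (((d : ℝ) - k) / d) := by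
  refine ⟨1, one_pos, fun p hp hmono j hj => ?_⟩
  have hkd : k < d := lt_of_le_of_lt hk (Nat.sub_lt (by omega) one_pos)
  have hdk0 : (0:ℝ) < (d:ℝ) - k := by
    have : (k:ℝ) < d := by exact_mod_cast hkd
    linarith
  have hd0 : (0:ℝ) < d := by exact_mod_cast hd
  set s := Finset.Icc 1 (j-1)
  set q : ℝ := (d:ℝ) / ((d:ℝ) - k)
  have hq1 : 1 ≤ q := by
    rw [le_div_iff₀ hdk0]
    have : (0:ℝ) ≤ k := Nat.cast_nonneg k
    linarith
  have key := Real.inner_le_weight_mul_Lp_of_nonneg s hq1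
      (fun i => (i:ℝ)^(d-1)) (fun i => p i ^ (d-k))
      (fun i => by positivity)
      (fun i => pow_nonneg (hp i).1 _)
  have hqinv : q⁻¹ = ((d:ℝ) - k) / d := by
    rw [inv_div]
  have hfq : ∀ i, (p i ^ (d-k)) ^ q = p i ^ d := by
    intro i
    rw [← Real.rpow_natCast (p i) (d-k), ← Real.rpow_mul (hp i).1]
    have : ((d-k : ℕ):ℝ) * q = (d:ℕ) := by
      have : ((d-k:ℕ):ℝ) = (d:ℝ) - k := by
        push_cast [Nat.cast_sub hkd.le]
        ring
      rw [this]
      simp only [q]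
      field_simp [hdk0.ne']
    rw [this, Real.rpow_natCast]
  simp only [hfq, hqinv] at key
  refine key.trans ?_
  rw [one_mul]
  have hX : (0:ℝ) ≤ (∑ i ∈ s, (i:ℝ)^(d-1) * p i ^ d) ^ (((d:ℝ) - k) / d) :=
    Real.rpow_nonneg (Finset.sum_nonneg fun i _ =>
      mul_nonneg (by positivity) (pow_nonneg (hp i).1 _)) _
  refine mul_le_mul_of_nonneg_right ?_ hX
  -- (∑ i in s, i^(d-1)) ^ (1 - q⁻¹) ≤ j^k
  have hsum : ∑ i ∈ s, (i:ℝ)^(d-1) ≤ (j:ℝ)^d := by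
    calc ∑ i ∈ s, (i:ℝ)^(d-1) ≤ ∑ i ∈ s, (j:ℝ)^(d-1) := by
          refine Finset.sum_le_sum fun i hi => ?_
          have hi' : i ≤ j - 1 := (Finset.mem_Icc.mp hi).2
          exact pow_le_pow_left₀ (Nat.cast_nonneg i) (by exact_mod_cast hi'.trans (Nat.sub_le j 1)) _
      _ = (s.card : ℝ) * (j:ℝ)^(d-1) := by rw [Finset.sum_const, nsmul_eq_mul]
      _ ≤ (j:ℝ) * (j:ℝ)^(d-1) := by
          have hcard : s.card ≤ j := by
            simp only [s, Nat.card_Icc]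
            omega
          exact mul_le_mul_of_nonneg_right (by exact_mod_cast hcard) (by positivity)
      _ = (j:ℝ)^d := by
          rw [← pow_succ']
          congr 1
          omega
  have h1q : 1 - ((d:ℝ) - k)/d = (k:ℝ)/d := by field_simp; ring
  rw [h1q]
  calc (∑ i ∈ s, (i:ℝ)^(d-1)) ^ ((k:ℝ)/d) ≤ ((j:ℝ)^d) ^ ((k:ℝ)/d) := by
        exact Real.rpow_le_rpow (Finset.sum_nonneg fun i _ => by positivity) hsum
          (by positivity)
    _ = (j:ℝ)^k := by
        rw [← Real.rpow_natCast (j:ℝ) d, ← Real.rpow_mul (Nat.cast_nonneg j)]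
        rw [show (d:ℝ) * ((k:ℝ)/d) = (k:ℕ) by field_simp]
        rw [Real.rpow_natCast]
end

section
/- Let (A_n)_{n≥1} be events such that ∑_{n≥1} P(A_n) = +∞ and limsup_{n→∞} (∑_{i=1}^n P(A_i))^2 / (∑_{1≤i,j≤n} P(A_i ∩ A_j)) = 1. Then P(limsup A_n) = 1, i.e., almost surely infinitely many A_n occur. -/
open MeasureTheory Filter

/-- Reverse Fatou for sets: `limsup μ(B n) ≤ μ (limsup B)`. -/
lemma aux_limsup_measure_le {Ω : Type*} [MeasurableSpace Ω] (μ : Measure Ω) [IsFiniteMeasure μ]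
    {B : ℕ → Set Ω} (hB : ∀ n, MeasurableSet (B n)) :
    Filter.limsup (fun n => μ (B n)) atTop ≤ μ (Filter.limsup B atTop) := by
  have hls : Filter.limsup B atTop = ⋂ n, ⋃ k, ⋃ _ : n ≤ k, B k := by
    rw [limsup_eq_iInf_iSup_of_nat]
    simp only [Set.iInf_eq_iInter, Set.iSup_eq_iUnion]
  have hanti : Antitone (fun n => ⋃ k, ⋃ _ : n ≤ k, B k) := by
    intro m n hmn
    exact Set.iUnion₂_subset fun k hk => Set.subset_iUnion₂ (s := fun k _ => B k) k (hmn.trans hk)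
  have hmeas : ∀ n, MeasurableSet (⋃ k, ⋃ _ : n ≤ k, B k) := fun n =>
    MeasurableSet.iUnion fun k => MeasurableSet.iUnion fun _ => hB k
  have hinf : μ (⋂ n, ⋃ k, ⋃ _ : n ≤ k, B k) = ⨅ n, μ (⋃ k, ⋃ _ : n ≤ k, B k) :=
    hanti.measure_iInter (fun n => (hmeas n).nullMeasurableSet)
      ⟨0, measure_ne_top μ _⟩
  rw [hls, hinf, limsup_eq_iInf_iSup_of_nat]
  refine le_iInf fun n => (iInf_le _ n).trans ?_
  exact iSup₂_le fun k hk => measure_mono (Set.subset_iUnion₂ (s := fun k _ => B k) k hk)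

/-- Kochen–Stone Borel–Cantelli lemma: if `∑ P(A_n) = ∞` and
`limsup (∑_{i≤n} P(A_i))² / (∑_{i,j≤n} P(A_i ∩ A_j)) = 1`, then `P(limsup A_n) = 1`. -/
theorem stmt_7 {Ω : Type*} [MeasurableSpace Ω] (μ : Measure Ω) [IsProbabilityMeasure μ]
    (A : ℕ → Set Ω) (hA : ∀ n, MeasurableSet (A n))
    (hdiv : Tendsto (fun n : ℕ => ∑ i ∈ Finset.Icc 1 n, (μ (A i)).toReal) atTop atTop)
    (hratio : Filter.limsup (fun n : ℕ =>
        (∑ i ∈ Finset.Icc 1 n, (μ (A i)).toReal) ^ 2 /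
          ∑ i ∈ Finset.Icc 1 n, ∑ j ∈ Finset.Icc 1 n, (μ (A i ∩ A j)).toReal)
        atTop = 1) :
    μ (Filter.limsup A atTop) = 1 := by
  classical
  set S : ℕ → ℝ := fun n => ∑ i ∈ Finset.Icc 1 n, (μ (A i)).toReal with hSdef
  set T : ℕ → ℝ := fun n =>
    ∑ i ∈ Finset.Icc 1 n, ∑ j ∈ Finset.Icc 1 n, (μ (A i ∩ A j)).toReal with hTdef
  set X : ℕ → Ω → ℝ := fun n ω => ∑ i ∈ Finset.Icc 1 n, (A i).indicator (1 : Ω → ℝ) ω with hXdef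
  have hXmeas : ∀ n, Measurable (X n) := fun n =>
    Finset.measurable_sum _ fun i _ => measurable_const.indicator (hA i)
  have hind_le_one : ∀ (s : Set Ω) (ω : Ω), s.indicator (1 : Ω → ℝ) ω ≤ 1 := by
    intro s ω; by_cases hω : ω ∈ s <;> simp [hω]
  have hind_nn : ∀ (s : Set Ω) (ω : Ω), 0 ≤ s.indicator (1 : Ω → ℝ) ω := fun s ω =>
    Set.indicator_nonneg (fun _ _ => zero_le_one) ω
  have hXnn : ∀ n ω, 0 ≤ X n ω := fun n ω => Finset.sum_nonneg fun i _ => hind_nn _ ω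
  have hXle : ∀ n ω, X n ω ≤ n := by
    intro n ω
    calc X n ω ≤ ∑ _i ∈ Finset.Icc 1 n, (1 : ℝ) :=
          Finset.sum_le_sum fun i _ => hind_le_one _ ω
      _ = (Finset.Icc 1 n).card := by simp
      _ ≤ n := by simp [Nat.card_Icc]
  have hXint : ∀ n, Integrable (X n) μ := fun n =>
    integrable_finset_sum _ fun i _ => (integrable_const (1 : ℝ)).indicator (hA i)
  have hEX : ∀ n, ∫ ω, X n ω ∂μ = S n := by
    intro n
    show ∫ ω, ∑ i ∈ Finset.Icc 1 n, (A i).indicator (1 : Ω → ℝ) ω ∂μ = S n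
    rw [integral_finset_sum]
    · exact Finset.sum_congr rfl fun i _ => integral_indicator_one (hA i)
    · exact fun i _ => (integrable_const (1 : ℝ)).indicator (hA i)
  have hSnn : ∀ n, 0 ≤ S n := fun n =>
    Finset.sum_nonneg fun i _ => ENNReal.toReal_nonneg
  have hEX2 : ∀ n, ∫ ω, (X n ω) ^ 2 ∂μ = T n := by
    intro n
    have hXsq : ∀ ω, (X n ω) ^ 2 =
        ∑ i ∈ Finset.Icc 1 n, ∑ j ∈ Finset.Icc 1 n, (A i ∩ A j).indicator (1 : Ω → ℝ) ω := by
      intro ω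
      rw [sq, hXdef, Finset.sum_mul_sum]
      refine Finset.sum_congr rfl fun i _ => Finset.sum_congr rfl fun j _ => ?_
      rw [Set.inter_indicator_one]
      rfl
    simp_rw [hXsq]
    rw [integral_finset_sum]
    · refine Finset.sum_congr rfl fun i _ => ?_
      rw [integral_finset_sum]
      · exact Finset.sum_congr rfl fun j _ => integral_indicator_one ((hA i).inter (hA j))
      · exact fun j _ => (integrable_const (1 : ℝ)).indicator ((hA i).inter (hA j))
    · exact fun i _ => integrable_finset_sum _ fun j _ =>
        (integrable_const (1 : ℝ)).indicator ((hA i).inter (hA j))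
  have hTS : ∀ n, S n ≤ T n := by
    intro n
    refine Finset.sum_le_sum fun i hi => ?_
    have h1 : (μ (A i)).toReal = (μ (A i ∩ A i)).toReal := by rw [Set.inter_self]
    rw [h1]
    exact Finset.single_le_sum (f := fun j => (μ (A i ∩ A j)).toReal)
      (fun j _ => ENNReal.toReal_nonneg) hi
  have key : ∀ δ : ℝ, 0 < δ → δ < 1 →
      ENNReal.ofReal ((1 - δ) ^ 2 * (1 - δ)) ≤ μ (Filter.limsup A atTop) := by
    intro δ hδ0 hδ1
    set B : ℕ → Set Ω := fun n => {ω | δ * S n ≤ X n ω} with hBdef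
    have hBmeas : ∀ n, MeasurableSet (B n) := fun n =>
      measurableSet_le measurable_const (hXmeas n)
    have hsub : Filter.limsup B atTop ⊆ Filter.limsup A atTop := by
      intro ω hω
      rw [mem_limsup_iff_frequently_mem] at hω ⊢
      by_contra hcon
      rw [Filter.not_frequently] at hcon
      obtain ⟨N, hN⟩ := eventually_atTop.1 hcon
      have hbd : ∀ n, X n ω ≤ N := by
        intro n
        have hXeq : X n ω = ∑ i ∈ (Finset.Icc 1 n).filter (· < N), (A i).indicator (1 : Ω → ℝ) ω := by
          rw [hXdef]
          refine (Finset.sum_subset (Finset.filter_subset _ _) ?_).symm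
          intro i hi hin
          have hiN : N ≤ i := by
            by_contra hlt
            exact hin (Finset.mem_filter.2 ⟨hi, not_le.1 hlt⟩)
          simp [Set.indicator_of_notMem (hN i hiN)]
        rw [hXeq]
        calc ∑ i ∈ (Finset.Icc 1 n).filter (· < N), (A i).indicator (1 : Ω → ℝ) ω
            ≤ ∑ _i ∈ (Finset.Icc 1 n).filter (· < N), (1 : ℝ) :=
              Finset.sum_le_sum fun i _ => hind_le_one _ ω
          _ = ((Finset.Icc 1 n).filter (· < N)).card := by simp
          _ ≤ N := by
              have hsubN : (Finset.Icc 1 n).filter (· < N) ⊆ Finset.range N := by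
                intro i hi
                exact Finset.mem_range.2 (Finset.mem_filter.1 hi).2
              have := Finset.card_le_card hsubN
              rw [Finset.card_range] at this
              exact_mod_cast this
      have hten : Tendsto (fun n => δ * S n) atTop atTop := hdiv.const_mul_atTop hδ0
      obtain ⟨n, hmem, hgt⟩ := (hω.and_eventually (hten.eventually_gt_atTop (N : ℝ))).exists
      have hmem' : δ * S n ≤ X n ω := hmem
      linarith [hbd n]
    have hev : ∀ᶠ n in atTop, (1 - δ) ^ 2 * (S n ^ 2 / T n) ≤ (μ (B n)).toReal := by
      filter_upwards [hdiv.eventually_gt_atTop 0] with n hSpos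
      have hTpos : 0 < T n := lt_of_lt_of_le hSpos (hTS n)
      set m : ℝ := (μ (B n)).toReal with hm
      have hmnn : 0 ≤ m := ENNReal.toReal_nonneg
      set Y : Ω → ℝ := (B n).indicator (X n) with hY
      have hYint : Integrable Y μ := (hXint n).indicator (hBmeas n)
      have hpt : ∀ ω, X n ω ≤ δ * S n + Y ω := by
        intro ω
        by_cases hω : ω ∈ B n
        · have h0 : 0 ≤ δ * S n := mul_nonneg hδ0.le (hSnn n)
          rw [hY]
          simp only [Set.indicator_of_mem hω]
          linarith
        · have hlt : X n ω < δ * S n := lt_of_not_ge hω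
          rw [hY]
          simp only [Set.indicator_of_notMem hω]
          linarith
      have hint1 : (1 - δ) * S n ≤ ∫ ω, Y ω ∂μ := by
        have h2 : ∫ ω, X n ω ∂μ ≤ ∫ ω, (δ * S n + Y ω) ∂μ :=
          integral_mono (hXint n) ((integrable_const _).add hYint) hpt
        rw [integral_add (integrable_const _) hYint, integral_const, probReal_univ,
          one_smul, hEX n] at h2
        linarith
      have hYnn : 0 ≤ ∫ ω, Y ω ∂μ :=
        integral_nonneg fun ω => Set.indicator_nonneg (fun x _ => hXnn n x) ω
      -- Cauchy-Schwarz
      have hhalf : ∀ x : ℝ, 0 ≤ x → (x ^ ((1 : ℝ) / 2)) ^ 2 = x := by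
        intro x hx
        rw [← Real.rpow_natCast (x ^ ((1 : ℝ) / 2)) 2, ← Real.rpow_mul hx]
        norm_num
      have hCS : ∫ ω, Y ω ∂μ ≤ (T n) ^ ((1 : ℝ) / 2) * m ^ ((1 : ℝ) / 2) := by
        have hconj : Real.HolderConjugate 2 2 := Real.holderConjugate_iff.mpr ⟨one_lt_two, by norm_num⟩
        have hfmeas : AEStronglyMeasurable (X n) μ := (hXmeas n).aestronglyMeasurable
        have hgmeas : AEStronglyMeasurable ((B n).indicator (1 : Ω → ℝ)) μ :=
          (measurable_const.indicator (hBmeas n)).aestronglyMeasurable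
        have hf : MemLp (X n) (ENNReal.ofReal 2) μ :=
          MemLp.of_bound hfmeas n (Filter.Eventually.of_forall fun ω => by
            rw [Real.norm_of_nonneg (hXnn n ω)]; exact hXle n ω)
        have hg : MemLp ((B n).indicator (1 : Ω → ℝ)) (ENNReal.ofReal 2) μ :=
          MemLp.of_bound hgmeas 1 (Filter.Eventually.of_forall fun ω => by
            rw [Real.norm_of_nonneg (hind_nn _ ω)]; exact hind_le_one _ ω)
        have hCS0 := integral_mul_le_Lp_mul_Lq_of_nonneg hconj
          (Filter.Eventually.of_forall (hXnn n))
          (Filter.Eventually.of_forall (hind_nn (B n))) hf hg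
        have hYeq : ∀ ω, X n ω * (B n).indicator (1 : Ω → ℝ) ω = Y ω := by
          intro ω
          by_cases hω : ω ∈ B n <;>
            simp [hY, Set.indicator_of_mem, Set.indicator_of_notMem, hω]
        have hXrpow : ∀ ω, X n ω ^ (2 : ℝ) = (X n ω) ^ 2 := fun ω => by
          rw [show (2 : ℝ) = ((2 : ℕ) : ℝ) by norm_num, Real.rpow_natCast]
        have hindrpow : ∀ ω, (B n).indicator (1 : Ω → ℝ) ω ^ (2 : ℝ)
            = (B n).indicator (1 : Ω → ℝ) ω := by
          intro ω
          by_cases hω : ω ∈ B n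
          · simp [Set.indicator_of_mem hω]
          · simp [Set.indicator_of_notMem hω, Real.zero_rpow (by norm_num : (2:ℝ) ≠ 0)]
        simp_rw [hYeq, hXrpow, hindrpow] at hCS0
        rw [hEX2 n, integral_indicator_one (hBmeas n)] at hCS0
        exact hCS0
      have hsqle : ((1 - δ) * S n) ^ 2 ≤ T n * m := by
        have h3 : ((1 - δ) * S n) ^ 2 ≤ ((T n) ^ ((1 : ℝ) / 2) * m ^ ((1 : ℝ) / 2)) ^ 2 := by
          apply pow_le_pow_left₀ (mul_nonneg (by linarith) (hSnn n))
          exact hint1.trans hCS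
        calc ((1 - δ) * S n) ^ 2 ≤ ((T n) ^ ((1 : ℝ) / 2) * m ^ ((1 : ℝ) / 2)) ^ 2 := h3
          _ = T n * m := by rw [mul_pow, hhalf _ hTpos.le, hhalf _ hmnn]
      calc (1 - δ) ^ 2 * (S n ^ 2 / T n) = ((1 - δ) * S n) ^ 2 / T n := by ring
        _ ≤ m := by
            rw [div_le_iff₀ hTpos]
            linarith
    have hcob : IsCoboundedUnder (· ≤ ·) atTop (fun n => S n ^ 2 / T n) := by
      refine Filter.IsBoundedUnder.isCoboundedUnder_le ⟨0, ?_⟩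
      refine Filter.eventually_map.2 (Filter.Eventually.of_forall fun n => ?_)
      exact div_nonneg (sq_nonneg _) ((hSnn n).trans (hTS n))
    have hfreq : ∃ᶠ n in atTop, 1 - δ < S n ^ 2 / T n := by
      apply frequently_lt_of_lt_limsup hcob
      rw [hratio]
      linarith
    have hfreq2 : ∃ᶠ n in atTop, ENNReal.ofReal ((1 - δ) ^ 2 * (1 - δ)) ≤ μ (B n) := by
      refine (hfreq.and_eventually hev).mono ?_
      rintro n ⟨h1, h2⟩
      apply ENNReal.ofReal_le_of_le_toReal
      calc (1 - δ) ^ 2 * (1 - δ) ≤ (1 - δ) ^ 2 * (S n ^ 2 / T n) :=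
            mul_le_mul_of_nonneg_left h1.le (sq_nonneg _)
        _ ≤ (μ (B n)).toReal := h2
    have hlim : ENNReal.ofReal ((1 - δ) ^ 2 * (1 - δ)) ≤
        Filter.limsup (fun n => μ (B n)) atTop :=
      le_limsup_of_frequently_le' hfreq2
    exact hlim.trans ((aux_limsup_measure_le μ hBmeas).trans (measure_mono hsub))
  have h1 : (1 : ENNReal) ≤ μ (Filter.limsup A atTop) := by
    have ha : Tendsto (fun k : ℕ => (1 : ℝ) / (k + 2)) atTop (nhds 0) := by
      simp only [one_div]
      exact tendsto_inv_atTop_zero.comp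
        (tendsto_atTop_add_const_right atTop 2 tendsto_natCast_atTop_atTop)
    have hb : Tendsto (fun k : ℕ => 1 - (1 : ℝ) / (k + 2)) atTop (nhds 1) := by
      have := (tendsto_const_nhds (x := (1:ℝ))).sub ha
      simpa using this
    have htend : Tendsto
        (fun k : ℕ => ENNReal.ofReal ((1 - (1 : ℝ) / (k + 2)) ^ 2 * (1 - (1 : ℝ) / (k + 2))))
        atTop (nhds 1) := by
      have hc : Tendsto
          (fun k : ℕ => (1 - (1 : ℝ) / (k + 2)) ^ 2 * (1 - (1 : ℝ) / (k + 2)))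
          atTop (nhds 1) := by
        have := (hb.pow 2).mul hb
        simpa using this
      have := ENNReal.tendsto_ofReal hc
      simpa using this
    refine le_of_tendsto htend (Filter.Eventually.of_forall fun k => ?_)
    apply key
    · positivity
    · rw [div_lt_one (by positivity)]
      have : (0:ℝ) ≤ (k:ℝ) := k.cast_nonneg
      linarith
  exact le_antisymm prob_le_one h1
end
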